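/- arXiv:1302.4205 — 2 statements merged into one kernel-verified Lean document; each statement's English description precedes it below -/
import Mathlib

section
/- A pointed directed graph ⟨V, E, v₀⟩ admits a partition of its edge set E into two disjoint sets T and B such that ⟨V, T, v₀⟩ is a tree and every edge (x, y) ∈ B has y an ancestor of x in the tree ⟨V, T, v₀⟩, if and only if for every vertex v ∈ V there exists a unique simple path from v₀ to v. -/
/-- `l` (the list of vertices after `a`) is a path from `a` to `b` along relation `R`. -/
def IsPath {V : Type} (R : V → V → Prop) (a b : V) (l : List V) : Prop :=
  List.Chain R a l ∧ (a :: l).getLast (List.cons_ne_nil a l) = b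

/-- `y` is an ancestor of `x` in the rooted graph `(T, v₀)`:
    `y` lies on some path from `v₀` to `x`. -/
def Ancestor {V : Type} (T : V → V → Prop) (v₀ y x : V) : Prop :=
  ∃ l, IsPath T v₀ x l ∧ y ∈ v₀ :: l

/-! In a tree every root path is simple: a repeated vertex `b` would give `b` a second, strictly
shorter root path. A simple `E`-path never uses a back edge `(c, b)`, because `b` already lies on
the tree path to `c`; so it is the tree path. Conversely, if `p v` is the unique simple path to `v`,
declare `(a, b)` a tree edge when `p b = p a ++ [b]`. The tree paths are then exactly the `p v`, and
an edge `(x, y)` that is not a tree edge has `y` on `p x`, since otherwise `p x ++ [y]` would be a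
simple path to `y` other than `p y`. -/

namespace IsPath

variable {V : Type} {R S : V → V → Prop} {a b c v : V} {l : List V}

theorem iff_isChain :
    IsPath R a b l ↔ (a :: l).IsChain R ∧ (a :: l).getLast (List.cons_ne_nil a l) = b :=
  Iff.rfl

theorem nil_iff : IsPath R a b [] ↔ a = b := by
  simp [iff_isChain]

theorem append_singleton_iff :
    IsPath R a v (l ++ [b]) ↔ v = b ∧ ∃ c, IsPath R a c l ∧ R c b := by
  simp only [iff_isChain, ← List.cons_append, List.isChain_append, List.getLast_concat]
  simp [List.getLast?_eq_some_getLast, eq_comm, and_comm]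

theorem eq_of_isPath (h₁ : IsPath R a b l) (h₂ : IsPath S a c l) : b = c :=
  h₁.2.symm.trans h₂.2

theorem mono (hRS : ∀ x y, R x y → S x y) (h : IsPath R a v l) : IsPath S a v l :=
  ⟨List.IsChain.imp hRS h.1, h.2⟩

@[elab_as_elim]
theorem induction_on {motive : ∀ v l, IsPath R a v l → Prop} (v : V) (l : List V)
    (h : IsPath R a v l) (nil : motive a [] (nil_iff.2 rfl))
    (snoc : ∀ c b l (hc : IsPath R a c l) (hcb : R c b),
      motive c l hc → motive b (l ++ [b]) (append_singleton_iff.2 ⟨rfl, c, hc, hcb⟩)) :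
    motive v l h := by
  induction l using List.reverseRecOn generalizing v with
  | nil => obtain rfl := nil_iff.1 h; exact nil
  | append_singleton l b ih =>
    obtain ⟨rfl, c, hc, hcb⟩ := append_singleton_iff.1 h
    exact snoc c v l hc hcb (ih c hc)

theorem exists_prefix_of_mem {u : V} (h : IsPath R a v l) (hu : u ∈ a :: l) :
    ∃ l', l' <+: l ∧ IsPath R a u l' := by
  induction v, l, h using induction_on with
  | nil => exact ⟨[], List.nil_prefix, nil_iff.2 (List.mem_singleton.1 hu).symm⟩
  | snoc c b l hc hcb ih =>
    rw [← List.cons_append, List.mem_append, List.mem_singleton] at hu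
    rcases hu with hu | rfl
    · obtain ⟨l', hl', hu'⟩ := ih hu
      exact ⟨l', hl'.trans (List.prefix_append l [b]), hu'⟩
    · exact ⟨l ++ [u], List.prefix_refl _, append_singleton_iff.2 ⟨rfl, c, hc, hcb⟩⟩

end IsPath

theorem List.nodup_cons_append_singleton {α : Type*} {a b : α} {l : List α} :
    (a :: (l ++ [b])).Nodup ↔ (a :: l).Nodup ∧ b ∉ a :: l := by
  rw [← List.cons_append, ← List.concat_eq_append, List.nodup_concat, and_comm]

section Tree

variable {V : Type} {E T B : V → V → Prop} {v₀ v : V} {l : List V}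

theorem IsPath.nodup_of_existsUnique (hT : ∀ v, ∃! l, IsPath T v₀ v l)
    (h : IsPath T v₀ v l) : (v₀ :: l).Nodup := by
  induction v, l, h using IsPath.induction_on with
  | nil => exact List.nodup_singleton v₀
  | snoc c b l hc hcb ih =>
    refine List.nodup_cons_append_singleton.2 ⟨ih, fun hb => ?_⟩
    obtain ⟨l', hl', hb'⟩ := hc.exists_prefix_of_mem hb
    have hlen := hl'.length_le
    rw [(hT b).unique hb' (IsPath.append_singleton_iff.2 ⟨rfl, c, hc, hcb⟩)] at hlen
    simp at hlen

theorem IsPath.of_nodup_of_ancestor (hE : ∀ a b, E a b → T a b ∨ B a b)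
    (hT : ∀ v, ∃! l, IsPath T v₀ v l) (hB : ∀ x y, B x y → Ancestor T v₀ y x)
    (h : IsPath E v₀ v l) (hnd : (v₀ :: l).Nodup) : IsPath T v₀ v l := by
  induction v, l, h using IsPath.induction_on with
  | nil => exact IsPath.nil_iff.2 rfl
  | snoc c b l hc hcb ih =>
    obtain ⟨hnd, hb⟩ := List.nodup_cons_append_singleton.1 hnd
    have hcT := ih hnd
    refine IsPath.append_singleton_iff.2
      ⟨rfl, c, hcT, (hE c b hcb).resolve_right fun hB' => hb ?_⟩
    obtain ⟨m, hm, hbm⟩ := hB c b hB'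
    rwa [(hT c).unique hm hcT] at hbm

end Tree

def UniqueSimplePaths {V : Type} (E : V → V → Prop) (v₀ : V) (p : V → List V) : Prop :=
  ∀ v l, IsPath E v₀ v l ∧ (v₀ :: l).Nodup ↔ l = p v

def pathTree {V : Type} (p : V → List V) (a b : V) : Prop :=
  p b = p a ++ [b]

namespace UniqueSimplePaths

variable {V : Type} {E : V → V → Prop} {v₀ v : V} {l : List V} {p : V → List V}

theorem isPath (hp : UniqueSimplePaths E v₀ p) (v : V) :
    IsPath E v₀ v (p v) ∧ (v₀ :: p v).Nodup :=
  (hp v (p v)).2 rfl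

theorem edge_of_pathTree (hp : UniqueSimplePaths E v₀ p) {a b : V} (h : pathTree p a b) :
    E a b := by
  have hb := (hp.isPath b).1
  rw [h, IsPath.append_singleton_iff] at hb
  obtain ⟨-, c, hc, hcb⟩ := hb
  rwa [hc.eq_of_isPath (hp.isPath a).1] at hcb

theorem isPath_pathTree_of_nodup (hp : UniqueSimplePaths E v₀ p)
    (h : IsPath E v₀ v l) (hnd : (v₀ :: l).Nodup) : IsPath (pathTree p) v₀ v l := by
  induction v, l, h using IsPath.induction_on with
  | nil => exact IsPath.nil_iff.2 rfl
  | snoc c b l hc hcb ih =>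
    have hnd_c := (List.nodup_cons_append_singleton.1 hnd).1
    have hlc : l = p c := (hp c l).1 ⟨hc, hnd_c⟩
    have hlb : l ++ [b] = p b :=
      (hp b _).1 ⟨IsPath.append_singleton_iff.2 ⟨rfl, c, hc, hcb⟩, hnd⟩
    exact IsPath.append_singleton_iff.2 ⟨rfl, c, ih hnd_c, by rw [pathTree, ← hlb, hlc]⟩

theorem isPath_pathTree (hp : UniqueSimplePaths E v₀ p) (v : V) :
    IsPath (pathTree p) v₀ v (p v) :=
  hp.isPath_pathTree_of_nodup (hp.isPath v).1 (hp.isPath v).2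

theorem eq_of_isPath_pathTree (hp : UniqueSimplePaths E v₀ p)
    (h : IsPath (pathTree p) v₀ v l) : l = p v := by
  induction v, l, h using IsPath.induction_on with
  | nil => exact (hp v₀ []).1 ⟨IsPath.nil_iff.2 rfl, List.nodup_singleton v₀⟩
  | snoc c b l hc hcb ih => rw [hcb, ih]

theorem ancestor_pathTree (hp : UniqueSimplePaths E v₀ p) {x y : V} (hxy : E x y)
    (hT : ¬ pathTree p x y) : Ancestor (pathTree p) v₀ y x := by
  refine ⟨p x, hp.isPath_pathTree x, by_contra fun hy => hT ?_⟩
  obtain ⟨hx, hnd⟩ := hp.isPath x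
  exact ((hp y _).1 ⟨IsPath.append_singleton_iff.2 ⟨rfl, x, hx, hxy⟩,
    List.nodup_cons_append_singleton.2 ⟨hnd, hy⟩⟩).symm

end UniqueSimplePaths

/-- A pointed digraph `⟨V, E, v₀⟩` admits a partition of `E` into `T` and `B` with
`⟨V, T, v₀⟩` a tree and every `B`-edge going back to an ancestor, iff every vertex
has a unique simple path from the root. -/
theorem stmt0 {V : Type} (E : V → V → Prop) (v₀ : V) :
    (∃ T B : V → V → Prop,
        (∀ a b, E a b ↔ (T a b ∨ B a b)) ∧
        (∀ a b, ¬ (T a b ∧ B a b)) ∧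
        (∀ v, ∃! l : List V, IsPath T v₀ v l) ∧
        (∀ x y, B x y → Ancestor T v₀ y x)) ↔
    (∀ v, ∃! l : List V, IsPath E v₀ v l ∧ (v₀ :: l).Nodup) := by
  constructor
  · rintro ⟨T, B, hE, -, hT, hB⟩ v
    obtain ⟨l, hl, hl_unique⟩ := hT v
    refine ⟨l, ⟨hl.mono fun a b h => (hE a b).2 (.inl h), hl.nodup_of_existsUnique hT⟩, ?_⟩
    exact fun q hq => hl_unique q (hq.1.of_nodup_of_ancestor (fun a b => (hE a b).1) hT hB hq.2)
  · intro hU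
    set p := fun v => (hU v).choose
    have hp : UniqueSimplePaths E v₀ p := fun v l => by
      rw [eq_comm, ExistsUnique.choose_eq_iff]
    refine ⟨pathTree p, fun a b => E a b ∧ ¬ pathTree p a b, fun a b => ?_,
      fun a b h => h.2.2 h.1,
      fun v => ⟨p v, hp.isPath_pathTree v, fun l hl => hp.eq_of_isPath_pathTree hl⟩,
      fun x y h => hp.ancestor_pathTree h.1 h.2⟩
    have := hp.edge_of_pathTree (a := a) (b := b)
    tauto
end

section
/- Let ≍_C be the coherence relation on ground substitutions with respect to a finite constant set C. If σ̄₁ ≍_C σ₁ and σ̄₂ ≍_C σ₂, the domains of σ₁ and σ₂ are disjoint, the domains of σ̄₁ and σ̄₂ are disjoint, and additionally for all x ∈ dom(σ₁), y ∈ dom(σ₂): σ̄₁(x) = σ̄₂(y) iff σ₁(x) = σ₂(y), then the disjoint unions satisfy (σ̄₁ ⊎ σ̄₂) ≍_C (σ₁ ⊎ σ₂). -/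
/-- A ground substitution: finite domain and constant values from `K` (= Σ₀). -/
def GSubst (V K : Type) : Type := Finset V × (V → K)

/-- Coherence `≍_C` of ground substitutions w.r.t. the constant set `C`. -/
def Coh {V K : Type} (C : Set K) (s t : GSubst V K) : Prop :=
  s.1 = t.1 ∧
  (∀ x ∈ s.1, (s.2 x ∈ C → s.2 x = t.2 x) ∧ (t.2 x ∈ C → s.2 x = t.2 x)) ∧
  (∀ x ∈ s.1, ∀ y ∈ s.1, (s.2 x = s.2 y ↔ t.2 x = t.2 y))

/-- Disjoint union of two ground substitutions with disjoint domains. -/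
def GSubst.union {V K : Type} [DecidableEq V] (s t : GSubst V K) : GSubst V K :=
  (s.1 ∪ t.1, fun x => if x ∈ s.1 then s.2 x else t.2 x)

/-- Coherence is preserved by disjoint unions, provided the cross equality patterns
of values also agree. -/
theorem stmt16 {V K : Type} [DecidableEq V] (C : Set K)
    (σb₁ σ₁ σb₂ σ₂ : GSubst V K)
    (h₁ : Coh C σb₁ σ₁) (h₂ : Coh C σb₂ σ₂)
    (hdisj : Disjoint σ₁.1 σ₂.1) (hdisjb : Disjoint σb₁.1 σb₂.1)
    (hcross : ∀ x ∈ σ₁.1, ∀ y ∈ σ₂.1, (σb₁.2 x = σb₂.2 y ↔ σ₁.2 x = σ₂.2 y)) :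
    Coh C (σb₁.union σb₂) (σ₁.union σ₂) := by
  obtain ⟨hd₁, hc₁, he₁⟩ := h₁
  obtain ⟨hd₂, hc₂, he₂⟩ := h₂
  have hnot₁ : ∀ x, x ∈ σb₁.1 → x ∉ σ₂.1 := fun x hx =>
    Finset.disjoint_left.mp hdisj (hd₁ ▸ hx)
  have hnot₂ : ∀ x, x ∈ σb₂.1 → x ∉ σb₁.1 := fun x hx =>
    Finset.disjoint_right.mp hdisjb hx
  refine ⟨by simp [GSubst.union, hd₁, hd₂], ?_, ?_⟩
  · intro x hx
    simp only [GSubst.union] at hx ⊢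
    rcases Finset.mem_union.mp hx with hx1 | hx2
    · rw [if_pos hx1, if_pos (hd₁ ▸ hx1)]
      exact hc₁ x hx1
    · rw [if_neg (hnot₂ x hx2), if_neg (fun h => hnot₁ x (hd₁ ▸ h) (hd₂ ▸ hx2))]
      exact hc₂ x hx2
  · intro x hx y hy
    simp only [GSubst.union] at hx hy ⊢
    rcases Finset.mem_union.mp hx with hx1 | hx2 <;>
      rcases Finset.mem_union.mp hy with hy1 | hy2
    · rw [if_pos hx1, if_pos hy1, if_pos (hd₁ ▸ hx1), if_pos (hd₁ ▸ hy1)]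
      exact he₁ x hx1 y hy1
    · rw [if_pos hx1, if_neg (hnot₂ y hy2), if_pos (hd₁ ▸ hx1),
        if_neg (fun h => hnot₁ y (hd₁ ▸ h) (hd₂ ▸ hy2))]
      exact hcross x (hd₁ ▸ hx1) y (hd₂ ▸ hy2)
    · rw [if_neg (hnot₂ x hx2), if_pos hy1,
        if_neg (fun h => hnot₁ x (hd₁ ▸ h) (hd₂ ▸ hx2)), if_pos (hd₁ ▸ hy1)]
      constructor
      · intro h; exact ((hcross y (hd₁ ▸ hy1) x (hd₂ ▸ hx2)).mp h.symm).symm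
      · intro h; exact ((hcross y (hd₁ ▸ hy1) x (hd₂ ▸ hx2)).mpr h.symm).symm
    · rw [if_neg (hnot₂ x hx2), if_neg (hnot₂ y hy2),
        if_neg (fun h => hnot₁ x (hd₁ ▸ h) (hd₂ ▸ hx2)),
        if_neg (fun h => hnot₁ y (hd₁ ▸ h) (hd₂ ▸ hy2))]
      exact he₂ x hx2 y hy2
end
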